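/- For every player i, every level k ∈ ℕ₀ and every round n ∈ ℕ₀, the survivor set Σⁿ_{θ_{ik}} of the Δ^κ-rationalization procedure is nonempty. -/

import Mathlib

open scoped BigOperators
open Classical

noncomputable section

/-- A belief of a player: a probability distribution over
(opponent level-type, opponent action) pairs. -/
structure Belief (B : Type*) where
  p : ℕ × B → ℝ
  nonneg : ∀ x, 0 ≤ p x
  hasSum_one : HasSum p 1

/-- Marginal probability assigned to the opponent's level-`t` type. -/
def Belief.marg {B : Type*} [Fintype B] (μ : Belief B) (t : ℕ) : ℝ := ∑ b : B, μ.p (t, b)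

/-- Probability assigned by a belief to a set of (level, action) pairs. -/
def Belief.probOn {B : Type*} (μ : Belief B) (S : Set (ℕ × B)) : ℝ := ∑' x, S.indicator μ.p x

/-- `f` normalized to the levels `0, …, k-1` (denoted `f^k` in the paper). -/
def fnorm (f : ℕ → ℝ) (k t : ℕ) : ℝ := f t / ∑ ℓ ∈ Finset.range k, f ℓ

/-- Membership in `Δ^{θ_{ik}}`: conditions K1–K3 for `k ≥ 1`; no restriction for `k = 0`. -/
def memDelta {B : Type*} [Fintype B] (f : ℕ → ℝ) (k : ℕ) (μ : Belief B) : Prop :=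
  k ≠ 0 →
    ((∀ t, k ≤ t → μ.marg t = 0) ∧
     (0 < μ.marg 0 → ∀ b : B, μ.p (0, b) / μ.marg 0 = 1 / (Fintype.card B : ℝ)) ∧
     (∀ t, t < k → μ.marg t = fnorm f k t))

/-- Expected payoff of own action `a` for the own level-`k` type given belief `μ`:
the level-0 type's payoff is constant `0`, all other types get `v`. -/
def expPay {A B : Type*} (v : A → B → ℝ) (k : ℕ) (μ : Belief B) (a : A) : ℝ :=
  ∑' x : ℕ × B, μ.p x * (if k = 0 then 0 else v a x.2)

/-- `a` is a best response to belief `μ` under the own level-`k` type. -/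
def isBR {A B : Type*} (v : A → B → ℝ) (k : ℕ) (μ : Belief B) (a : A) : Prop :=
  ∀ a' : A, expPay v k μ a' ≤ expPay v k μ a

/-- The Δ^κ-rationalization procedure; component 1 is player 1's set of surviving
(level, action) pairs, component 2 is player 2's. -/
def SigmaProc {A B : Type*} [Fintype A] [Fintype B]
    (v1 : A → B → ℝ) (v2 : B → A → ℝ) (f : ℕ → ℝ) :
    ℕ → Set (ℕ × A) × Set (ℕ × B)
  | 0 => (Set.univ, Set.univ)
  | n + 1 =>
      let P := SigmaProc v1 v2 f n
      ({x | x ∈ P.1 ∧ ∃ μ : Belief B, memDelta f x.1 μ ∧ μ.probOn P.2 = 1 ∧ isBR v1 x.1 μ x.2},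
       {y | y ∈ P.2 ∧ ∃ μ : Belief A, memDelta f y.1 μ ∧ μ.probOn P.1 = 1 ∧ isBR v2 y.1 μ y.2})

/-- The section `Σⁿ_{θ_{1k}}` of player 1 (as a set of actions). -/
def SigmaSec1 {A B : Type*} [Fintype A] [Fintype B]
    (v1 : A → B → ℝ) (v2 : B → A → ℝ) (f : ℕ → ℝ) (n k : ℕ) : Set A :=
  {a | (k, a) ∈ (SigmaProc v1 v2 f n).1}

/-- The section `Σⁿ_{θ_{2k}}` of player 2 (as a set of actions). -/
def SigmaSec2 {A B : Type*} [Fintype A] [Fintype B]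
    (v1 : A → B → ℝ) (v2 : B → A → ℝ) (f : ℕ → ℝ) (n k : ℕ) : Set B :=
  {b | (k, b) ∈ (SigmaProc v1 v2 f n).2}

/-- The CH-procedure requirement on beliefs at step `n+1`, given the previous
sections `Ψⁿ` of the opponent: the support of `μ` equals `∪_{t=0}^{n} Ψⁿ_{θ_{-i,t}}`
and `μ` is conditionally uniform over each `Ψⁿ_{θ_{-i,t}}`. -/
def CHBelief {B : Type*} (Ψ : ℕ → Set B) (n : ℕ) (μ : Belief B) : Prop :=
  (∀ x : ℕ × B, μ.p x ≠ 0 ↔ x.1 ≤ n ∧ x.2 ∈ Ψ x.1) ∧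
  (∀ t, t ≤ n → ∀ b b' : B, b ∈ Ψ t → b' ∈ Ψ t → μ.p (t, b) = μ.p (t, b'))

/-- The CH-procedure: step `n` returns, for each player and each level `k`,
the set of actions in `Ψⁿ_{θ_{ik}}`. -/
def CHProc {A B : Type*} [Fintype A] [Fintype B]
    (v1 : A → B → ℝ) (v2 : B → A → ℝ) (f : ℕ → ℝ) :
    ℕ → (ℕ → Set A) × (ℕ → Set B)
  | 0 => (fun _ => Set.univ, fun _ => Set.univ)
  | n + 1 =>
      let P := CHProc v1 v2 f n
      (fun k =>
        if k = n + 1 then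
          {a | ∃ μ : Belief B, memDelta f (n + 1) μ ∧ CHBelief P.2 n μ ∧ isBR v1 (n + 1) μ a}
        else P.1 k,
       fun k =>
        if k = n + 1 then
          {b | ∃ μ : Belief A, memDelta f (n + 1) μ ∧ CHBelief P.1 n μ ∧ isBR v2 (n + 1) μ b}
        else P.2 k)

/-- `Ψⁿ_{θ_{1k}}` for player 1 (as a set of actions). -/
def CHSec1 {A B : Type*} [Fintype A] [Fintype B]
    (v1 : A → B → ℝ) (v2 : B → A → ℝ) (f : ℕ → ℝ) (n k : ℕ) : Set A :=
  (CHProc v1 v2 f n).1 k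

/-- `Ψⁿ_{θ_{2k}}` for player 2 (as a set of actions). -/
def CHSec2 {A B : Type*} [Fintype A] [Fintype B]
    (v1 : A → B → ℝ) (v2 : B → A → ℝ) (f : ℕ → ℝ) (n k : ℕ) : Set B :=
  (CHProc v1 v2 f n).2 k

end

/-! Every level-0 action survives every round, since the level-0 payoff is constant. Given
survivors of all opponent levels after round `n`, the level-`k` type has a belief satisfying
K1–K3 that is concentrated on them: marginal `f^k`, uniform at level 0 and a point mass on a
surviving action at each level `1 ≤ t < k`. A best response to it exists as the action set is
finite, and it survives round `n + 1` because the rounds decrease, which makes the requirement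
`Σ^{n+1} ⊆ Σⁿ` in the definition of the procedure automatic. -/

open Set

theorem succ_eq_of_succ_eq_inter {α : Type*} {X R : ℕ → Set α} (hR : Antitone R)
    (h0 : X 0 = univ) (hX : ∀ n, X (n + 1) = X n ∩ R n) (n : ℕ) : X (n + 1) = R n := by
  induction n with
  | zero => rw [hX, h0, univ_inter]
  | succ n ih => rw [hX, ih, inter_eq_right.mpr (hR n.le_succ)]

namespace Belief

variable {B : Type*} (μ : Belief B)

theorem probOn_le_one (S : Set (ℕ × B)) : μ.probOn S ≤ 1 := by
  rw [probOn, ← μ.hasSum_one.tsum_eq]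
  exact (μ.hasSum_one.summable.indicator S).tsum_le_tsum
    (indicator_le_self' fun x _ => μ.nonneg x) μ.hasSum_one.summable

theorem probOn_mono {S T : Set (ℕ × B)} (hST : S ⊆ T) : μ.probOn S ≤ μ.probOn T :=
  (μ.hasSum_one.summable.indicator S).tsum_le_tsum
    (indicator_le_indicator_of_subset hST μ.nonneg) (μ.hasSum_one.summable.indicator T)

theorem probOn_eq_one_of_subset {S T : Set (ℕ × B)} (hST : S ⊆ T) (hS : μ.probOn S = 1) :
    μ.probOn T = 1 :=
  (μ.probOn_le_one T).antisymm (hS ▸ μ.probOn_mono hST)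

theorem probOn_eq_one_of_support_subset {S : Set (ℕ × B)} (h : ∀ x, μ.p x ≠ 0 → x ∈ S) :
    μ.probOn S = 1 := by
  have hS : S.indicator μ.p = μ.p := indicator_eq_self.mpr fun x hx => h x hx
  rw [probOn, hS, μ.hasSum_one.tsum_eq]

end Belief

noncomputable section Beliefs

variable {B : Type*} [Fintype B] [Nonempty B] (f : ℕ → ℝ)

/-- Conditional distribution of the opponent's action given level `t`: uniform at level `0`,
as K2 demands, and a point mass on `g t` above. -/
def levelCond (g : ℕ → B) (t : ℕ) (b : B) : ℝ :=
  if t = 0 then (Fintype.card B : ℝ)⁻¹ else if b = g t then 1 else 0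

theorem levelCond_nonneg (g : ℕ → B) (t : ℕ) (b : B) : 0 ≤ levelCond g t b := by
  unfold levelCond
  split_ifs <;> positivity

theorem sum_levelCond (g : ℕ → B) (t : ℕ) : ∑ b, levelCond g t b = 1 := by
  by_cases ht : t = 0
  · simp [levelCond, ht, Finset.card_univ]
  · simp [levelCond, ht]

def levelWeight (k t : ℕ) : ℝ := if t < k then fnorm f k t else 0

variable {f}

theorem fnorm_pos (hf : ∀ n, 0 < f n) {k : ℕ} (hk : k ≠ 0) (t : ℕ) : 0 < fnorm f k t :=
  div_pos (hf t) (Finset.sum_pos (fun _ _ => hf _) (Finset.nonempty_range_iff.mpr hk))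

theorem levelWeight_nonneg (hf : ∀ n, 0 < f n) (k t : ℕ) : 0 ≤ levelWeight f k t := by
  unfold levelWeight
  split_ifs with ht
  exacts [(fnorm_pos hf (Nat.ne_zero_of_lt ht) t).le, le_rfl]

theorem sum_levelWeight (hf : ∀ n, 0 < f n) {k : ℕ} (hk : k ≠ 0) :
    ∑ t ∈ Finset.range k, levelWeight f k t = 1 := by
  have hw : ∀ t ∈ Finset.range k, levelWeight f k t = f t / ∑ ℓ ∈ Finset.range k, f ℓ :=
    fun t ht => if_pos (Finset.mem_range.mp ht)
  rw [Finset.sum_congr rfl hw, ← Finset.sum_div,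
    div_self (Finset.sum_pos (fun _ _ => hf _) (Finset.nonempty_range_iff.mpr hk)).ne']

theorem hasSum_levelBelief (hf : ∀ n, 0 < f n) {k : ℕ} (hk : k ≠ 0) (g : ℕ → B) :
    HasSum (fun x : ℕ × B => levelWeight f k x.1 * levelCond g x.1 x.2) 1 := by
  have hzero : ∀ x ∉ Finset.range k ×ˢ (Finset.univ : Finset B),
      levelWeight f k x.1 * levelCond g x.1 x.2 = 0 := fun x hx => by
    rw [levelWeight, if_neg fun h => hx (by simpa using h), zero_mul]
  have hsum :
      ∑ x ∈ Finset.range k ×ˢ Finset.univ, levelWeight f k x.1 * levelCond g x.1 x.2 = 1 := by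
    simp only [Finset.sum_product, ← Finset.mul_sum, sum_levelCond, mul_one, sum_levelWeight hf hk]
  exact hsum ▸ hasSum_sum_of_ne_finset_zero hzero

def levelBelief (hf : ∀ n, 0 < f n) {k : ℕ} (hk : k ≠ 0) (g : ℕ → B) : Belief B where
  p x := levelWeight f k x.1 * levelCond g x.1 x.2
  nonneg x := mul_nonneg (levelWeight_nonneg hf k x.1) (levelCond_nonneg g x.1 x.2)
  hasSum_one := hasSum_levelBelief hf hk g

variable (hf : ∀ n, 0 < f n) {k : ℕ} (hk : k ≠ 0) (g : ℕ → B)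

theorem levelBelief_marg (t : ℕ) : (levelBelief hf hk g).marg t = levelWeight f k t := by
  simp only [Belief.marg, levelBelief, ← Finset.mul_sum, sum_levelCond, mul_one]

theorem levelBelief_memDelta : memDelta f k (levelBelief hf hk g) := by
  have hk0 : 0 < k := Nat.pos_of_ne_zero hk
  refine fun _ => ⟨fun t ht => ?_, fun _ b => ?_, fun t ht => ?_⟩
  · rw [levelBelief_marg, levelWeight, if_neg ht.not_gt]
  · rw [levelBelief_marg]
    simp only [levelBelief, levelWeight, levelCond, if_pos hk0, if_true]
    field_simp [(fnorm_pos hf hk 0).ne']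
  · rw [levelBelief_marg, levelWeight, if_pos ht]

theorem levelBelief_probOn {S : Set (ℕ × B)} (hS0 : ∀ b, (0, b) ∈ S) (hSg : ∀ t, (t, g t) ∈ S) :
    (levelBelief hf hk g).probOn S = 1 := by
  refine Belief.probOn_eq_one_of_support_subset _ fun ⟨t, b⟩ hx => ?_
  by_cases ht : t = 0
  · exact ht ▸ hS0 b
  · have hb : b = g t := by
      by_contra hb
      exact hx (by simp [levelBelief, levelCond, ht, hb])
    exact hb ▸ hSg t

end Beliefs

theorem isBR_zero {A B : Type*} (v : A → B → ℝ) (μ : Belief B) (a : A) : isBR v 0 μ a :=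
  fun _ => by simp [expPay]

theorem exists_isBR {A B : Type*} [Finite A] [Nonempty A] (v : A → B → ℝ) (k : ℕ) (μ : Belief B) :
    ∃ a, isBR v k μ a :=
  Finite.exists_max (expPay v k μ)

/-- Level 0 has to be covered entirely because K2 makes beliefs uniform there. -/
def LevelsCovered {B : Type*} (S : Set (ℕ × B)) : Prop :=
  (∀ b, (0, b) ∈ S) ∧ ∀ t, ∃ b, (t, b) ∈ S

theorem levelsCovered_univ {B : Type*} [Nonempty B] : LevelsCovered (univ : Set (ℕ × B)) :=
  ⟨fun _ => trivial, fun _ => ⟨Classical.arbitrary B, trivial⟩⟩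

section Rationalizability

variable {A B : Type*} [Fintype B] (v : A → B → ℝ) (f : ℕ → ℝ)

def Rationalizable (S : Set (ℕ × B)) (x : ℕ × A) : Prop :=
  ∃ μ : Belief B, memDelta f x.1 μ ∧ μ.probOn S = 1 ∧ isBR v x.1 μ x.2

variable {v f}

theorem Rationalizable.mono {S T : Set (ℕ × B)} (hST : S ⊆ T) {x : ℕ × A}
    (h : Rationalizable v f S x) : Rationalizable v f T x :=
  let ⟨μ, hδ, hS, hbr⟩ := h
  ⟨μ, hδ, μ.probOn_eq_one_of_subset hST hS, hbr⟩

theorem levelsCovered_rationalizable [Fintype A] [Nonempty A] [Nonempty B] (hf : ∀ n, 0 < f n)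
    {S : Set (ℕ × B)} (hS : LevelsCovered S) : LevelsCovered {x | Rationalizable v f S x} := by
  choose g hg using hS.2
  have hbelief : ∀ k, ∃ μ : Belief B, memDelta f k μ ∧ μ.probOn S = 1 := by
    intro k
    rcases eq_or_ne k 0 with rfl | hk
    -- every belief lies in `Δ^{θ_0}`; take the level-1 one
    · exact ⟨levelBelief hf (k := 1) one_ne_zero g, fun h => absurd rfl h,
        levelBelief_probOn hf one_ne_zero g hS.1 hg⟩
    · exact ⟨levelBelief hf hk g, levelBelief_memDelta hf hk g, levelBelief_probOn hf hk g hS.1 hg⟩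
  refine ⟨fun a => ?_, fun k => ?_⟩
  · obtain ⟨μ, hδ, hμS⟩ := hbelief 0
    exact ⟨μ, hδ, hμS, isBR_zero v μ a⟩
  · obtain ⟨μ, hδ, hμS⟩ := hbelief k
    obtain ⟨a, hbr⟩ := exists_isBR v k μ
    exact ⟨a, μ, hδ, hμS, hbr⟩

end Rationalizability

section Procedure

variable {A B : Type*} [Fintype A] [Fintype B] (v1 : A → B → ℝ) (v2 : B → A → ℝ) (f : ℕ → ℝ)

theorem antitone_sigmaProc_fst : Antitone fun n => (SigmaProc v1 v2 f n).1 :=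
  antitone_nat_of_succ_le fun _ _ hx => hx.1

theorem antitone_sigmaProc_snd : Antitone fun n => (SigmaProc v1 v2 f n).2 :=
  antitone_nat_of_succ_le fun _ _ hx => hx.1

theorem sigmaProc_succ_fst (n : ℕ) :
    (SigmaProc v1 v2 f (n + 1)).1 = {x | Rationalizable v1 f (SigmaProc v1 v2 f n).2 x} :=
  succ_eq_of_succ_eq_inter (X := fun m => (SigmaProc v1 v2 f m).1)
    (R := fun m => {x | Rationalizable v1 f (SigmaProc v1 v2 f m).2 x})
    (fun _ _ hlm _ => Rationalizable.mono (antitone_sigmaProc_snd v1 v2 f hlm)) rfl (fun _ => rfl) n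

theorem sigmaProc_succ_snd (n : ℕ) :
    (SigmaProc v1 v2 f (n + 1)).2 = {x | Rationalizable v2 f (SigmaProc v1 v2 f n).1 x} :=
  succ_eq_of_succ_eq_inter (X := fun m => (SigmaProc v1 v2 f m).2)
    (R := fun m => {x | Rationalizable v2 f (SigmaProc v1 v2 f m).1 x})
    (fun _ _ hlm _ => Rationalizable.mono (antitone_sigmaProc_fst v1 v2 f hlm)) rfl (fun _ => rfl) n

end Procedure

theorem sigma_sections_nonempty_general {A B : Type*} [Fintype A] [Fintype B] [Nonempty A] [Nonempty B]
    (v1 : A → B → ℝ) (v2 : B → A → ℝ)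
    (f : ℕ → ℝ) (hf : ∀ n, 0 < f n) :
    ∀ n k : ℕ, (SigmaSec1 v1 v2 f n k).Nonempty ∧ (SigmaSec2 v1 v2 f n k).Nonempty := by
  suffices h : ∀ n, LevelsCovered (SigmaProc v1 v2 f n).1 ∧ LevelsCovered (SigmaProc v1 v2 f n).2
    from fun n k => ⟨(h n).1.2 k, (h n).2.2 k⟩
  intro n
  induction n with
  | zero => exact ⟨levelsCovered_univ, levelsCovered_univ⟩
  | succ n ih =>
    rw [sigmaProc_succ_fst, sigmaProc_succ_snd]
    exact ⟨levelsCovered_rationalizable hf ih.2, levelsCovered_rationalizable hf ih.1⟩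

/-- all survivor sets of the Δ^κ-rationalization procedure are nonempty. -/
theorem sigma_sections_nonempty {A B : Type*} [Fintype A] [Fintype B] [Nonempty A] [Nonempty B]
    (v1 : A → B → ℝ) (v2 : B → A → ℝ)
    (f : ℕ → ℝ) (hf : ∀ n, 0 < f n) (hfsum : HasSum f 1) :
    ∀ n k : ℕ, (SigmaSec1 v1 v2 f n k).Nonempty ∧ (SigmaSec2 v1 v2 f n k).Nonempty :=
  sigma_sections_nonempty_general v1 v2 f hf
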